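/- Let N be an odd squarefree positive integer, let ℓ be a divisor of N with ℓ > 1, let m be a divisor of N, and set ε := (−1)^((ℓ−1)/2). Let n > 0 be an integer such that −εn = D_{ℓ,n}·f_n² and −ℓn = D′_{ℓ,n}·(f′_n)² with D_{ℓ,n}, D′_{ℓ,n} fundamental discriminants. Define, for a prime p, A_p(ℓ,n) := f_p·(1 − (D′_{ℓ,n}/p)/p)/(1 − p^{−2}), C_p(ℓ,n) := 1 − (D′_{ℓ,n}/p), and D_p(ℓ,n) := σ₁(f_p) − σ₁(f_p/p)·(D_{ℓ,n}/p)·(p/ℓ), where σ₁(f_p/p) := 0 if p ∤ f_p. Then H(ℓ,m,N;n) = L(0,χ_{D′_{ℓ,n}}) · (∏_{p prime, p | f_n, p ∤ N} D_p(ℓ,n)) · (∏_{p prime, p | m} C_p(ℓ,n)) · (∏_{p prime, p | N/m} A_p(ℓ,n)) · (gcd(ℓ, D_{ℓ,n})/gcd(ℓ, D_{ℓ,n}, m)). -/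

import Mathlib

open scoped BigOperators

/-- The Kronecker symbol `(D/p)` at a prime `p`. -/
def kronP (D : ℤ) (p : ℕ) : ℤ :=
  if p = 2 then
    if D % 2 = 0 then 0 else if D % 8 = 1 ∨ D % 8 = 7 then 1 else -1
  else jacobiSym D p

/-- The Kronecker symbol `(D/m)` for positive `m`: the completely multiplicative
function of `m` determined by its values at primes. -/
def kron (D : ℤ) (m : ℕ) : ℤ :=
  m.factorization.prod fun p k => kronP D p ^ k

/-- Fundamental discriminant: `1`, or squarefree `≡ 1 (mod 4)`, or `4k` with
`k ≡ 2, 3 (mod 4)` squarefree. -/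
def IsFundDisc (D : ℤ) : Prop :=
  D = 1 ∨ (D % 4 = 1 ∧ Squarefree D) ∨
    ∃ k : ℤ, D = 4 * k ∧ (k % 4 = 2 ∨ k % 4 = 3) ∧ Squarefree k

/-- The decomposition `a = D·f²` with `D` a fundamental discriminant, `f ≥ 1`. -/
noncomputable def fdpair (a : ℤ) : ℤ × ℕ := by
  classical
  exact if h : ∃ p : ℤ × ℕ, IsFundDisc p.1 ∧ 1 ≤ p.2 ∧ a = p.1 * (p.2 : ℤ) ^ 2
    then h.choose else (0, 0)

/-- `D_n`, the fundamental discriminant with `-n = D_n · f_n²`. -/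
noncomputable def Dn (n : ℕ) : ℤ := (fdpair (-(n : ℤ))).1

/-- `f_n`, the conductor with `-n = D_n · f_n²`. -/
noncomputable def fn (n : ℕ) : ℕ := (fdpair (-(n : ℤ))).2

/-- `f_p := p^(v_p f)`, the `p`-part of `f`. -/
def ppart (f p : ℕ) : ℕ := p ^ f.factorization p

/-- The weight `w(a,b,c)` in the definition of the Hurwitz class number. -/
def hurwitzW (a b c : ℤ) : ℚ :=
  if a = b ∧ b = c then 3 else if b = 0 ∧ a = c then 2 else 1

/-- The Hurwitz class number `H(n)`: `H(0) = -1/12`, and for `n > 0` the weighted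
count of reduced forms of discriminant `-n` (automatically `0` for `n ≡ 1, 2 mod 4`). -/
noncomputable def hurwitz (n : ℕ) : ℚ :=
  if n = 0 then -(1 / 12)
  else
    ∑ a ∈ Finset.Icc (1 : ℤ) (n : ℤ), ∑ b ∈ Finset.Icc (-(n : ℤ)) (n : ℤ),
      ∑ c ∈ Finset.Icc (1 : ℤ) ((n : ℤ) ^ 2 + (n : ℤ)),
        if b ^ 2 - 4 * a * c = -(n : ℤ) ∧ |b| ≤ a ∧ a ≤ c ∧ ((|b| = a ∨ a = c) → 0 ≤ b)
        then (hurwitzW a b c)⁻¹ else 0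

/-- `L(0, χ_D) = -(1/|D|) Σ_{a=1}^{|D|} (D/a) a` for a fundamental discriminant `D < 0`. -/
noncomputable def Lval (D : ℤ) : ℚ :=
  -(1 / (D.natAbs : ℚ)) * ∑ a ∈ Finset.Icc 1 D.natAbs, (kron D a : ℚ) * (a : ℚ)

/-- `L_m(0, χ_D) = L(0,χ_D) ∏_{p ∣ m} (1 - (D/p))`. -/
noncomputable def LvalM (m : ℕ) (D : ℤ) : ℚ :=
  Lval D * ∏ p ∈ m.primeFactors, (1 - (kron D p : ℚ))

/-- `σ_{m,N,1}(r) = Σ_{d ∣ r, gcd(d,m)=1, gcd(r/d, N/m)=1} d`. -/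
def sigmaMN (m N r : ℕ) : ℕ :=
  ∑ d ∈ r.divisors, if Nat.gcd d m = 1 ∧ Nat.gcd (r / d) (N / m) = 1 then d else 0

/-- The Pei–Wang generalized Hurwitz class number `H_{m,N}(n)`. -/
noncomputable def HPW (m N n : ℕ) : ℚ :=
  if n = 0 then
    if m = N then -(1 / 12) * ∏ p ∈ N.primeFactors, (1 - (p : ℚ)) else 0
  else if n % 4 = 0 ∨ n % 4 = 3 then
    LvalM m (Dn n) *
      (∏ p ∈ (N / m).primeFactors,
        (1 - (kron (Dn n) p : ℚ) / (p : ℚ)) / (1 - ((p : ℚ)⁻¹) ^ 2)) *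
      ∑ a ∈ (fn n).divisors,
        if Nat.gcd a N = 1 then
          (ArithmeticFunction.moebius a : ℚ) * (kron (Dn n) a : ℚ) *
            (sigmaMN m N (fn n / a) : ℚ)
        else 0
  else 0

/-- The Li–Skoruppa–Zhou modified class number `H^{(N₁,N₂)}(n)`. -/
noncomputable def HLSZ (N₁ N₂ n : ℕ) : ℚ :=
  if n = 0 then
    -(1 / 12) * (∏ p ∈ N₁.primeFactors, (1 - (p : ℚ))) *
      ∏ p ∈ N₂.primeFactors, ((p : ℚ) + 1)
  else if n % 4 = 0 ∨ n % 4 = 3 then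
    hurwitz (n / (∏ p ∈ (N₁ * N₂).primeFactors, ppart (fn n) p) ^ 2) *
      (∏ p ∈ N₁.primeFactors, (1 - (kron (Dn n) p : ℚ))) *
      ∏ p ∈ N₂.primeFactors,
        ((2 * (p : ℚ) * (ppart (fn n) p : ℚ) - (p : ℚ) - 1 -
            (kron (Dn n) p : ℚ) * (2 * (ppart (fn n) p : ℚ) - (p : ℚ) - 1)) /
          ((p : ℚ) - 1))
  else 0

/-- Number of distinct prime divisors, `ω(N)`. -/
def omegaN (N : ℕ) : ℕ := N.primeFactors.card

/-- The local factor `A_p(n)`, for `-n = D·f²`. -/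
noncomputable def locA (D : ℤ) (f p : ℕ) : ℚ :=
  (ppart f p : ℚ) * (1 - (kron D p : ℚ) / (p : ℚ)) / (1 - ((p : ℚ)⁻¹) ^ 2)

/-- The local factor `B_p(n)`, for `-n = D·f²`. -/
noncomputable def locB (D : ℤ) (f p : ℕ) : ℚ :=
  (2 * (p : ℚ) * (ppart f p : ℚ) - (p : ℚ) - 1 -
      (kron D p : ℚ) * (2 * (ppart f p : ℚ) - (p : ℚ) - 1)) / ((p : ℚ) - 1)

/-- The local factor `C_p(n)`, for `-n = D·f²`. -/
noncomputable def locC (D : ℤ) (p : ℕ) : ℚ := 1 - (kron D p : ℚ)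

/-- The local factor `D_p(n) = σ₁(f_p) - σ₁(f_p/p)·(D/p)`, for `-n = D·f²`. -/
noncomputable def locD (D : ℤ) (f p : ℕ) : ℚ :=
  (ArithmeticFunction.sigma 1 (ppart f p) : ℚ) -
    (ArithmeticFunction.sigma 1 (ppart f p / p) : ℚ) * (kron D p : ℚ)

/-- The character local factor `D_p(ℓ,n) = σ₁(f_p) - σ₁(f_p/p)·(D_{ℓ,n}/p)·(p/ℓ)`. -/
noncomputable def locDchar (l : ℕ) (D : ℤ) (f p : ℕ) : ℚ :=
  (ArithmeticFunction.sigma 1 (ppart f p) : ℚ) -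
    (ArithmeticFunction.sigma 1 (ppart f p / p) : ℚ) * (kron D p : ℚ) *
      (jacobiSym (p : ℤ) l : ℚ)

/-- The Pei–Wang generalized class number `H(ℓ, m, N; n)` with character `χ_ℓ`. -/
noncomputable def HPWchar (l m N n : ℕ) : ℚ := by
  classical
  exact
    if n = 0 then
      if m = N then -(1 / 12) * ∏ p ∈ N.primeFactors, (1 - (p : ℚ)) else 0
    else if (∃ q : ℤ × ℕ, IsFundDisc q.1 ∧ 1 ≤ q.2 ∧
            -(((-1 : ℤ) ^ ((l - 1) / 2)) * (n : ℤ)) = q.1 * (q.2 : ℤ) ^ 2) ∧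
        (∃ q : ℤ × ℕ, IsFundDisc q.1 ∧ 1 ≤ q.2 ∧
            -((l : ℤ) * (n : ℤ)) = q.1 * (q.2 : ℤ) ^ 2) then
      LvalM m (fdpair (-((l : ℤ) * (n : ℤ)))).1 *
        (∏ p ∈ (N / m).primeFactors,
          (1 - (kron (fdpair (-((l : ℤ) * (n : ℤ)))).1 p : ℚ) / (p : ℚ)) /
            (1 - ((p : ℚ)⁻¹) ^ 2)) *
        ((Int.gcd (l : ℤ) (fdpair (-(((-1 : ℤ) ^ ((l - 1) / 2)) * (n : ℤ)))).1 : ℚ) /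
          (Nat.gcd (Int.gcd (l : ℤ) (fdpair (-(((-1 : ℤ) ^ ((l - 1) / 2)) * (n : ℤ)))).1) m : ℚ)) *
        ∑ a ∈ (fdpair (-(((-1 : ℤ) ^ ((l - 1) / 2)) * (n : ℤ)))).2.divisors,
          if Nat.gcd a N = 1 then
            (ArithmeticFunction.moebius a : ℚ) *
              (kron (fdpair (-(((-1 : ℤ) ^ ((l - 1) / 2)) * (n : ℤ)))).1 a : ℚ) *
              (jacobiSym (a : ℤ) l : ℚ) *
              (sigmaMN m N ((fdpair (-(((-1 : ℤ) ^ ((l - 1) / 2)) * (n : ℤ)))).2 / a) : ℚ)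
          else 0
    else 0

/-! Once `fdpair` is identified with the given decompositions (a fundamental discriminant times
a square determines both factors, by comparing `p`-adic valuations), the claim is an evaluation of
`Σ_{a ∣ f, (a,N) = 1} μ(a) (D/a) (a/ℓ) σ_{m,N,1}(f/a)`. This sum is the Dirichlet convolution of
`μ·χ`, where `χ(a) = (D/a)(a/ℓ)` on integers prime to `N`, with `σ_{m,N,1}`, itself the
convolution of two multiplicative functions; so it factors over the primes `p ∣ f`. As `μ` kills
prime powers beyond `p`, the factor at `p ∤ N` is `σ₁(f_p) − χ(p) σ₁(f_p/p)`, while at `p ∣ N`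
it is `σ_{m,N,1}(f_p)`, which is `f_p` if `p ∣ N/m` and `1` if `p ∣ m` (`N` being squarefree). -/

theorem Squarefree.eq_and_eq_of_mul_sq_eq {s₁ s₂ : ℤ} {f₁ f₂ : ℕ} (hs₁ : Squarefree s₁)
    (hs₂ : Squarefree s₂) (hf₁ : f₁ ≠ 0) (hf₂ : f₂ ≠ 0)
    (h : s₁ * (f₁ : ℤ) ^ 2 = s₂ * (f₂ : ℤ) ^ 2) : s₁ = s₂ ∧ f₁ = f₂ := by
  have hnat : s₁.natAbs * f₁ ^ 2 = s₂.natAbs * f₂ ^ 2 := by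
    simpa [Int.natAbs_mul, Int.natAbs_pow] using congrArg Int.natAbs h
  have hf : f₁ = f₂ := by
    refine Nat.eq_of_factorization_eq hf₁ hf₂ fun p => ?_
    have hp := congrArg (·.factorization p) hnat
    simp only [Nat.factorization_mul (Int.natAbs_ne_zero.mpr hs₁.ne_zero) (pow_ne_zero 2 hf₁),
      Nat.factorization_mul (Int.natAbs_ne_zero.mpr hs₂.ne_zero) (pow_ne_zero 2 hf₂),
      Nat.factorization_pow, Finsupp.add_apply, Finsupp.smul_apply, smul_eq_mul] at hp
    have h₁ := (Int.squarefree_natAbs.mpr hs₁).natFactorization_le_one p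
    have h₂ := (Int.squarefree_natAbs.mpr hs₂).natFactorization_le_one p
    omega
  subst hf
  exact ⟨mul_right_cancel₀ (pow_ne_zero 2 (Int.natCast_ne_zero.mpr hf₁)) h, rfl⟩

theorem IsFundDisc.exists_eq_sq_mul_squarefree {D : ℤ} (hD : IsFundDisc D) :
    ∃ (c : ℕ) (s : ℤ), Squarefree s ∧ D = c ^ 2 * s ∧
      (c = 1 ∧ s % 4 = 1 ∨ c = 2 ∧ (s % 4 = 2 ∨ s % 4 = 3)) := by
  rcases hD with rfl | ⟨hD4, hsf⟩ | ⟨k, rfl, hk4, hsf⟩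
  · exact ⟨1, 1, squarefree_one, by norm_num, by norm_num⟩
  · exact ⟨1, D, hsf, by norm_num, Or.inl ⟨rfl, hD4⟩⟩
  · exact ⟨2, k, hsf, by norm_num, Or.inr ⟨rfl, hk4⟩⟩

theorem IsFundDisc.eq_and_eq_of_mul_sq_eq {D₁ D₂ : ℤ} {f₁ f₂ : ℕ} (hD₁ : IsFundDisc D₁)
    (hD₂ : IsFundDisc D₂) (hf₁ : f₁ ≠ 0) (hf₂ : f₂ ≠ 0)
    (h : D₁ * (f₁ : ℤ) ^ 2 = D₂ * (f₂ : ℤ) ^ 2) : D₁ = D₂ ∧ f₁ = f₂ := by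
  obtain ⟨c₁, s₁, hs₁, rfl, hc₁⟩ := hD₁.exists_eq_sq_mul_squarefree
  obtain ⟨c₂, s₂, hs₂, rfl, hc₂⟩ := hD₂.exists_eq_sq_mul_squarefree
  have hc₁0 : c₁ ≠ 0 := by omega
  have hc₂0 : c₂ ≠ 0 := by omega
  obtain ⟨rfl, hcf⟩ := hs₁.eq_and_eq_of_mul_sq_eq hs₂ (mul_ne_zero hc₁0 hf₁)
    (mul_ne_zero hc₂0 hf₂) (by push_cast; linear_combination h)
  obtain rfl : c₁ = c₂ := by omega
  exact ⟨rfl, Nat.eq_of_mul_eq_mul_left (Nat.pos_of_ne_zero hc₁0) hcf⟩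

theorem fdpair_eq_of_isFundDisc {a D : ℤ} {f : ℕ} (hD : IsFundDisc D) (hf : 1 ≤ f)
    (ha : a = D * (f : ℤ) ^ 2) : fdpair a = (D, f) := by
  have hex : ∃ q : ℤ × ℕ, IsFundDisc q.1 ∧ 1 ≤ q.2 ∧ a = q.1 * (q.2 : ℤ) ^ 2 :=
    ⟨(D, f), hD, hf, ha⟩
  obtain ⟨hq, hq1, hqa⟩ := hex.choose_spec
  obtain ⟨hD', hf'⟩ := hq.eq_and_eq_of_mul_sq_eq hD (by omega) (by omega) (hqa ▸ ha)
  rw [fdpair, dif_pos hex]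
  exact Prod.ext hD' hf'

theorem kron_one (D : ℤ) : kron D 1 = 1 := by simp [kron]

theorem kron_mul (D : ℤ) {a b : ℕ} (ha : a ≠ 0) (hb : b ≠ 0) :
    kron D (a * b) = kron D a * kron D b := by
  rw [kron, Nat.factorization_mul ha hb]
  exact Finsupp.prod_add_index' (fun _ => pow_zero _) (fun _ _ _ => pow_add _ _ _)

open ArithmeticFunction
open scoped ArithmeticFunction.Moebius ArithmeticFunction.sigma

namespace ArithmeticFunction

theorem mul_apply_prime_pow {R : Type*} [Semiring R] (f g : ArithmeticFunction R) {p : ℕ}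
    (hp : p.Prime) (k : ℕ) :
    (f * g) (p ^ k) = ∑ j ∈ Finset.range (k + 1), f (p ^ j) * g (p ^ (k - j)) := by
  rw [mul_apply, Nat.sum_divisorsAntidiagonal (fun a b => f a * g b),
    Nat.sum_divisors_prime_pow hp]
  refine Finset.sum_congr rfl fun j hj => ?_
  rw [Nat.pow_div (Nat.lt_succ_iff.mp (Finset.mem_range.mp hj)) hp.pos]

theorem pmul_moebius_mul_apply_prime_pow {R : Type*} [CommRing R] {χ : ArithmeticFunction R}
    (hχ : χ 1 = 1) (h : ArithmeticFunction R) {p k : ℕ} (hp : p.Prime) (hk : k ≠ 0) :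
    (pmul (↑μ : ArithmeticFunction R) χ * h) (p ^ k) = h (p ^ k) - χ p * h (p ^ (k - 1)) := by
  obtain ⟨k, rfl⟩ := Nat.exists_eq_add_one_of_ne_zero hk
  have hsq : ∀ j, μ (p ^ (j + 2)) = 0 := fun j => by
    rw [moebius_apply_prime_pow hp (by omega), if_neg (by omega)]
  rw [mul_apply_prime_pow _ _ hp, Finset.sum_range_succ', Finset.sum_range_succ',
    Finset.sum_eq_zero fun j _ => by rw [pmul_apply, intCoe_apply, hsq, Int.cast_zero, zero_mul,
      zero_mul]]
  simp only [pmul_apply, intCoe_apply, pow_zero, zero_add, pow_one, moebius_apply_one, hχ,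
    Nat.sub_zero, Nat.add_sub_cancel]
  rw [moebius_apply_prime hp]
  push_cast
  ring

def coprimeIndicator (m : ℕ) : ArithmeticFunction ℕ :=
  ⟨fun d => if d ≠ 0 ∧ d.Coprime m then 1 else 0, by simp⟩

theorem coprimeIndicator_apply (m d : ℕ) :
    coprimeIndicator m d = if d ≠ 0 ∧ d.Coprime m then 1 else 0 := rfl

theorem isMultiplicative_coprimeIndicator (m : ℕ) : (coprimeIndicator m).IsMultiplicative := by
  refine ⟨by simp [coprimeIndicator_apply], fun {a b} _ => ?_⟩
  rw [coprimeIndicator_apply, coprimeIndicator_apply, coprimeIndicator_apply,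
    ite_zero_mul_ite_zero, mul_one]
  exact if_congr (by rw [mul_ne_zero_iff, Nat.coprime_mul_iff_left]; tauto) rfl rfl

theorem coprimeIndicator_prime_pow (m : ℕ) {p : ℕ} (hp : p.Prime) (j : ℕ) :
    coprimeIndicator m (p ^ j) = if j = 0 ∨ ¬p ∣ m then 1 else 0 := by
  rcases Nat.eq_zero_or_pos j with rfl | hj
  · simp [coprimeIndicator_apply]
  · simp [coprimeIndicator_apply, hp.ne_zero, Nat.coprime_pow_left_iff hj,
      hp.coprime_iff_not_dvd, hj.ne']

end ArithmeticFunction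

theorem Squarefree.prime_dvd_div_iff {N m p : ℕ} (hsf : Squarefree N) (hm : m ∣ N)
    (hp : p.Prime) (hpN : p ∣ N) : p ∣ N / m ↔ ¬p ∣ m := by
  refine ⟨fun hpNm hpm => hp.not_isUnit (hsf p ?_), fun hpm => ?_⟩
  · simpa [Nat.div_mul_cancel hm] using mul_dvd_mul hpNm hpm
  · rw [← Nat.mul_div_cancel' hm] at hpN
    exact (hp.dvd_mul.mp hpN).resolve_left hpm

theorem ppart_eq_one_of_notMem {f p : ℕ} (hp : p ∉ f.primeFactors) : ppart f p = 1 := by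
  rw [← Nat.support_factorization, Finsupp.notMem_support_iff] at hp
  rw [ppart, hp, pow_zero]

def sigmaMNFun (m N : ℕ) : ArithmeticFunction ℕ :=
  pmul .id (coprimeIndicator m) * coprimeIndicator (N / m)

theorem sigmaMNFun_apply (m N r : ℕ) : sigmaMNFun m N r = sigmaMN m N r := by
  rw [sigmaMNFun, mul_apply, Nat.sum_divisorsAntidiagonal
    (fun a b => pmul .id (coprimeIndicator m) a * coprimeIndicator (N / m) b), sigmaMN]
  refine Finset.sum_congr rfl fun d hd => ?_
  have hd0 : d ≠ 0 := (Nat.pos_of_mem_divisors hd).ne'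
  have hrd : r / d ≠ 0 := (Nat.div_pos (Nat.divisor_le hd) (Nat.pos_of_mem_divisors hd)).ne'
  by_cases hdm : d.Coprime m <;>
    simp [pmul_apply, coprimeIndicator_apply, hd0, hrd, hdm, Nat.coprime_iff_gcd_eq_one]

theorem isMultiplicative_sigmaMNFun (m N : ℕ) : (sigmaMNFun m N).IsMultiplicative :=
  (isMultiplicative_id.pmul (isMultiplicative_coprimeIndicator m)).mul
    (isMultiplicative_coprimeIndicator _)

theorem sigmaMN_prime_pow (m N : ℕ) {p : ℕ} (hp : p.Prime) (k : ℕ) :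
    sigmaMN m N (p ^ k) = ∑ j ∈ Finset.range (k + 1),
      if (k - j = 0 ∨ ¬p ∣ N / m) ∧ (j = 0 ∨ ¬p ∣ m) then p ^ j else 0 := by
  rw [← sigmaMNFun_apply, sigmaMNFun, mul_apply_prime_pow _ _ hp]
  simp [pmul_apply, coprimeIndicator_prime_pow _ hp, ite_and]

theorem sigmaMN_prime_pow_of_not_dvd {m N p : ℕ} (hm : m ∣ N) (hp : p.Prime) (hpN : ¬p ∣ N)
    (k : ℕ) : sigmaMN m N (p ^ k) = σ 1 (p ^ k) := by
  have hpm : ¬p ∣ m := fun h => hpN (h.trans hm)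
  have hpNm : ¬p ∣ N / m := fun h => hpN (h.trans (Nat.div_dvd_of_dvd hm))
  simp [sigmaMN_prime_pow _ _ hp, sigma_one_apply_prime_pow hp, hpm, hpNm]

theorem sigmaMN_prime_pow_of_dvd {m N p : ℕ} (hsf : Squarefree N) (hm : m ∣ N) (hp : p.Prime)
    (hpN : p ∣ N) (k : ℕ) : sigmaMN m N (p ^ k) = if p ∣ N / m then p ^ k else 1 := by
  rw [sigmaMN_prime_pow _ _ hp]
  by_cases hpm : p ∣ m
  · simp [hsf.prime_dvd_div_iff hm hp hpN, hpm]
  · rw [Finset.sum_eq_single_of_mem k (by simp)] <;>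
      simp only [Finset.mem_range, Order.lt_add_one_iff, ne_eq, hsf.prime_dvd_div_iff hm hp hpN,
        hpm, not_false_eq_true, not_true_eq_false, or_false, or_true, and_true, ite_eq_right_iff,
        Nat.pow_eq_zero, tsub_self, ↓reduceIte]
    omega

noncomputable def twistedKron (D : ℤ) (l N : ℕ) : ArithmeticFunction ℚ :=
  ⟨fun a => if a ≠ 0 ∧ a.Coprime N then ((kron D a * jacobiSym a l : ℤ) : ℚ) else 0, by simp⟩

theorem twistedKron_apply (D : ℤ) (l N a : ℕ) : twistedKron D l N a =
    if a ≠ 0 ∧ a.Coprime N then ((kron D a * jacobiSym a l : ℤ) : ℚ) else 0 := rfl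

theorem isMultiplicative_twistedKron (D : ℤ) (l N : ℕ) :
    (twistedKron D l N).IsMultiplicative := by
  refine IsMultiplicative.iff_ne_zero.mpr ⟨by simp [twistedKron_apply, kron_one], ?_⟩
  intro a b ha hb _
  simp only [twistedKron_apply, ite_zero_mul_ite_zero, mul_ne_zero_iff, Nat.coprime_mul_iff_left]
  refine if_congr (by tauto) ?_ rfl
  rw [kron_mul D ha hb, Nat.cast_mul, jacobiSym.mul_left]
  push_cast
  ring

noncomputable def twistedDivisorSum (D : ℤ) (l m N : ℕ) : ArithmeticFunction ℚ :=
  pmul (↑μ : ArithmeticFunction ℚ) (twistedKron D l N) * ↑(sigmaMNFun m N)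

theorem twistedDivisorSum_apply (D : ℤ) (l m N f : ℕ) :
    twistedDivisorSum D l m N f = ∑ a ∈ f.divisors,
      if Nat.gcd a N = 1 then
        (μ a : ℚ) * (kron D a : ℚ) * (jacobiSym (a : ℤ) l : ℚ) * (sigmaMN m N (f / a) : ℚ)
      else 0 := by
  rw [twistedDivisorSum, mul_apply, Nat.sum_divisorsAntidiagonal
    (fun a b => pmul (↑μ : ArithmeticFunction ℚ) (twistedKron D l N) a *
      (↑(sigmaMNFun m N) : ArithmeticFunction ℚ) b)]
  refine Finset.sum_congr rfl fun a ha => ?_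
  have ha0 : a ≠ 0 := (Nat.pos_of_mem_divisors ha).ne'
  rw [pmul_apply, twistedKron_apply, intCoe_apply, natCoe_apply, sigmaMNFun_apply]
  by_cases haN : a.Coprime N
  · rw [if_pos ⟨ha0, haN⟩, if_pos haN]
    push_cast
    ring
  · rw [if_neg (by tauto), if_neg haN, mul_zero, zero_mul]

theorem isMultiplicative_twistedDivisorSum (D : ℤ) (l m N : ℕ) :
    (twistedDivisorSum D l m N).IsMultiplicative :=
  (isMultiplicative_moebius.intCast.pmul (isMultiplicative_twistedKron D l N)).mul
    (isMultiplicative_sigmaMNFun m N).natCast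

theorem twistedDivisorSum_prime_pow_of_not_dvd (D : ℤ) (l : ℕ) {m N p k : ℕ} (hm : m ∣ N)
    (hp : p.Prime) (hpN : ¬p ∣ N) (hk : k ≠ 0) :
    twistedDivisorSum D l m N (p ^ k) =
      (σ 1 (p ^ k) : ℚ) - (σ 1 (p ^ (k - 1)) : ℚ) * (kron D p : ℚ) * (jacobiSym p l : ℚ) := by
  have hpN' : p.Coprime N := hp.coprime_iff_not_dvd.mpr hpN
  rw [twistedDivisorSum,
    pmul_moebius_mul_apply_prime_pow (isMultiplicative_twistedKron D l N).map_one _ hp hk,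
    twistedKron_apply, if_pos ⟨hp.ne_zero, hpN'⟩]
  simp only [natCoe_apply, sigmaMNFun_apply, sigmaMN_prime_pow_of_not_dvd hm hp hpN, Int.cast_mul]
  ring

theorem twistedDivisorSum_prime_pow_of_dvd (D : ℤ) (l : ℕ) {m N p k : ℕ} (hsf : Squarefree N)
    (hm : m ∣ N) (hp : p.Prime) (hpN : p ∣ N) (hk : k ≠ 0) :
    twistedDivisorSum D l m N (p ^ k) = if p ∣ N / m then (p : ℚ) ^ k else 1 := by
  have hpN' : ¬p.Coprime N := fun h => hp.ne_one (Nat.Coprime.eq_one_of_dvd h hpN)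
  rw [twistedDivisorSum,
    pmul_moebius_mul_apply_prime_pow (isMultiplicative_twistedKron D l N).map_one _ hp hk]
  simp [twistedKron_apply, sigmaMNFun_apply, sigmaMN_prime_pow_of_dvd hsf hm hp hpN, hpN']

theorem twistedDivisorSum_ppart (D : ℤ) (l : ℕ) {m N f p : ℕ} (hsf : Squarefree N) (hm : m ∣ N)
    (hp : p ∈ f.primeFactors) :
    twistedDivisorSum D l m N (ppart f p) = (if ¬p ∣ N then locDchar l D f p else 1) *
      (if p ∈ (N / m).primeFactors then (ppart f p : ℚ) else 1) := by
  have hpp : p.Prime := Nat.prime_of_mem_primeFactors hp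
  have hk : f.factorization p ≠ 0 := by
    rw [← Finsupp.mem_support_iff, Nat.support_factorization]
    exact hp
  have hNm : N / m ≠ 0 :=
    (Nat.div_ne_zero_iff_of_dvd hm).mpr ⟨hsf.ne_zero, ne_zero_of_dvd_ne_zero hsf.ne_zero hm⟩
  by_cases hpN : p ∣ N
  · rw [ppart, twistedDivisorSum_prime_pow_of_dvd D l hsf hm hpp hpN hk, if_neg (not_not.mpr hpN),
      one_mul]
    simp [hpp, hNm]
  · have hpNm : p ∉ (N / m).primeFactors := fun h =>
      hpN ((Nat.dvd_of_mem_primeFactors h).trans (Nat.div_dvd_of_dvd hm))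
    have hdiv : p ^ f.factorization p / p = p ^ (f.factorization p - 1) :=
      Nat.div_eq_of_eq_mul_left hpp.pos (by rw [← pow_succ, Nat.sub_add_cancel (by omega)])
    rw [ppart, twistedDivisorSum_prime_pow_of_not_dvd D l hm hpp hpN hk, if_pos hpN, if_neg hpNm,
      mul_one, locDchar, ppart, hdiv]

theorem twistedDivisorSum_eq_prod (D : ℤ) (l : ℕ) {m N f : ℕ} (hsf : Squarefree N) (hm : m ∣ N)
    (hf : f ≠ 0) :
    twistedDivisorSum D l m N f = (∏ p ∈ f.primeFactors.filter fun p => ¬p ∣ N, locDchar l D f p) *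
      ∏ p ∈ (N / m).primeFactors, (ppart f p : ℚ) := by
  rw [(isMultiplicative_twistedDivisorSum D l m N).multiplicative_factorization _ hf,
    Nat.prod_factorization_eq_prod_primeFactors]
  refine (Finset.prod_congr rfl fun p hp => twistedDivisorSum_ppart D l hsf hm hp).trans ?_
  rw [Finset.prod_mul_distrib, Finset.prod_filter, Finset.prod_ite_mem]
  congr 1
  rw [Finset.inter_comm]
  refine Finset.prod_subset Finset.inter_subset_left fun p _ hp => ?_
  rw [ppart_eq_one_of_notMem fun h => hp (Finset.mem_inter.mpr ⟨‹_›, h⟩), Nat.cast_one]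

theorem PWchar_local_general (N l m : ℕ) (hsf : Squarefree N) (hm : m ∣ N) (n : ℕ) (hn : 0 < n)
    (D D' : ℤ) (f f' : ℕ) (hD : IsFundDisc D) (hD' : IsFundDisc D')
    (hf : 1 ≤ f) (hf' : 1 ≤ f')
    (hDf : -(((-1 : ℤ) ^ ((l - 1) / 2)) * (n : ℤ)) = D * (f : ℤ) ^ 2)
    (hDf' : -((l : ℤ) * (n : ℤ)) = D' * (f' : ℤ) ^ 2) :
    HPWchar l m N n =
      Lval D' * (∏ p ∈ f.primeFactors.filter fun p => ¬p ∣ N, locDchar l D f p) *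
        (∏ p ∈ m.primeFactors, locC D' p) *
        (∏ p ∈ (N / m).primeFactors, locA D' f p) *
        ((Int.gcd (l : ℤ) D : ℚ) / (Nat.gcd (Int.gcd (l : ℤ) D) m : ℚ)) := by
  have hex : (∃ q : ℤ × ℕ, IsFundDisc q.1 ∧ 1 ≤ q.2 ∧
        -(((-1 : ℤ) ^ ((l - 1) / 2)) * (n : ℤ)) = q.1 * (q.2 : ℤ) ^ 2) ∧
      (∃ q : ℤ × ℕ, IsFundDisc q.1 ∧ 1 ≤ q.2 ∧ -((l : ℤ) * (n : ℤ)) = q.1 * (q.2 : ℤ) ^ 2) :=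
    ⟨⟨(D, f), hD, hf, hDf⟩, ⟨(D', f'), hD', hf', hDf'⟩⟩
  rw [HPWchar, if_neg hn.ne', if_pos hex, fdpair_eq_of_isFundDisc hD hf hDf,
    fdpair_eq_of_isFundDisc hD' hf' hDf']
  dsimp only
  rw [← twistedDivisorSum_apply, twistedDivisorSum_eq_prod D l hsf hm (by omega), LvalM]
  simp only [locC, locA, Finset.prod_div_distrib, Finset.prod_mul_distrib]
  ring

/-- Local expression for the Pei–Wang class number with character. -/
theorem PWchar_local (N l m : ℕ) (hN : 0 < N) (hodd : Odd N) (hsf : Squarefree N)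
    (hl : l ∣ N) (hl1 : 1 < l) (hm : m ∣ N) (n : ℕ) (hn : 0 < n)
    (D D' : ℤ) (f f' : ℕ) (hD : IsFundDisc D) (hD' : IsFundDisc D')
    (hf : 1 ≤ f) (hf' : 1 ≤ f')
    (hDf : -(((-1 : ℤ) ^ ((l - 1) / 2)) * (n : ℤ)) = D * (f : ℤ) ^ 2)
    (hDf' : -((l : ℤ) * (n : ℤ)) = D' * (f' : ℤ) ^ 2) :
    HPWchar l m N n =
      Lval D' * (∏ p ∈ f.primeFactors.filter fun p => ¬p ∣ N, locDchar l D f p) *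
        (∏ p ∈ m.primeFactors, locC D' p) *
        (∏ p ∈ (N / m).primeFactors, locA D' f p) *
        ((Int.gcd (l : ℤ) D : ℚ) / (Nat.gcd (Int.gcd (l : ℤ) D) m : ℚ)) :=
  PWchar_local_general N l m hsf hm n hn D D' f f' hD hD' hf hf' hDf hDf'
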